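/- Let d ≥ 4 and let ξ ∈ ℂ with ξ ≠ 0. A point of ℂ^{d+4} of the form (q,Q,e,b_0,…,b_d) = (0,0,ξ,b_0,…,b_d) belongs to 𝒴(d) if and only if b_1 = b_2 = ⋯ = b_{d−1} = 0 and b_0·b_d = −ξ^{d−2}. -/
import Mathlib


/-- The sequence `Ψ_m(q,Q,e)`: `Ψ 0 = 1`, `Ψ 1 = e`, `Ψ m = e·Ψ (m−1) − qQ·Ψ (m−2)`. -/
noncomputable def PsiC (p e : ℂ) : ℕ → ℂ
  | 0 => 1
  | 1 => e
  | m + 2 => e * PsiC p e (m + 1) - p * PsiC p e m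

/-- The `i`-th coordinate of a point of `ℂ^(d+4)`
(`i = 0` is `q`, `i = 1` is `Q`, `i = 2` is `e`, `i = 3+j` is `b_j` for `0 ≤ j ≤ d`). -/
noncomputable def coord {d : ℕ} (v : Fin (d + 4) → ℂ) (i : ℕ) : ℂ :=
  if h : i < d + 4 then v ⟨i, h⟩ else 0

/-- The variety `𝒴(d) ⊆ ℂ^(d+4)`. -/
def Yset (d : ℕ) : Set (Fin (d + 4) → ℂ) :=
  {v | ∀ j k : ℕ, 1 ≤ j → j ≤ k → k ≤ d - 1 →
    coord v 2 * coord v (3 + j) =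
        coord v 0 * coord v (3 + (j + 1)) + coord v 1 * coord v (3 + (j - 1)) ∧
    coord v (3 + j) * coord v (3 + k) - coord v (3 + (j - 1)) * coord v (3 + (k + 1)) =
      coord v 0 ^ (d - k - 1) * coord v 1 ^ (j - 1) *
        PsiC (coord v 0 * coord v 1) (coord v 2) (k - j)}

lemma psi_zero (e : ℂ) : ∀ m, PsiC 0 e m = e ^ m
  | 0 => by simp [PsiC]
  | 1 => by simp [PsiC]
  | m + 2 => by
      rw [PsiC, psi_zero e (m + 1)]
      ring

/-- For `d ≥ 4` and `ξ ≠ 0`, a point of the form `(0,0,ξ,b_0,…,b_d)`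
belongs to `𝒴(d)` iff `b_1 = ⋯ = b_{d−1} = 0` and `b_0·b_d = −ξ^(d−2)`. -/
theorem stmt_13 (d : ℕ) (hd : 4 ≤ d) (ξ : ℂ) (hξ : ξ ≠ 0) (b : ℕ → ℂ) :
    (fun i : Fin (d + 4) =>
        if (i : ℕ) = 0 then 0
        else if (i : ℕ) = 1 then 0
        else if (i : ℕ) = 2 then ξ
        else b ((i : ℕ) - 3)) ∈ Yset d ↔
      (∀ j : ℕ, 1 ≤ j → j ≤ d - 1 → b j = 0) ∧ b 0 * b d = -ξ ^ (d - 2) := by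
  set v : Fin (d + 4) → ℂ := fun i : Fin (d + 4) =>
        if (i : ℕ) = 0 then 0
        else if (i : ℕ) = 1 then 0
        else if (i : ℕ) = 2 then ξ
        else b ((i : ℕ) - 3) with hv
  have c0 : coord v 0 = 0 := by simp [coord, hv]
  have c1 : coord v 1 = 0 := by
    have h : (1 : ℕ) < d + 4 := by omega
    simp [coord, h, hv]
  have c2 : coord v 2 = ξ := by
    have h : (2 : ℕ) < d + 4 := by omega
    simp [coord, h, hv]
  have cb : ∀ j, j ≤ d → coord v (3 + j) = b j := by
    intro j hj
    have h : 3 + j < d + 4 := by omega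
    have h1 : 3 + j ≠ 1 := by omega
    have h2 : 3 + j ≠ 2 := by omega
    simp [coord, h, hv, h1, h2]
  constructor
  · intro h
    have hz : ∀ j, 1 ≤ j → j ≤ d - 1 → b j = 0 := by
      intro j hj1 hj2
      have h1 := (h j j hj1 le_rfl hj2).1
      rw [c0, c1, c2, cb j (by omega)] at h1
      have : ξ * b j = 0 := by rw [h1]; ring
      rcases mul_eq_zero.1 this with h | h
      · exact absurd h hξ
      · exact h
    refine ⟨hz, ?_⟩
    have h2 := (h 1 (d - 1) le_rfl (by omega) le_rfl).2
    have hdd : d - 1 + 1 = d := by omega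
    rw [hdd] at h2
    rw [c0, c1, c2, cb 1 (by omega), cb (d - 1) (by omega), cb 0 (by omega),
      cb d le_rfl] at h2
    have e1 : d - (d - 1) - 1 = 0 := by omega
    have e2 : (1 : ℕ) - 1 = 0 := by omega
    have e3 : d - 1 - 1 = d - 2 := by omega
    rw [e1, e2, e3, hz 1 le_rfl (by omega), hz (d - 1) (by omega) le_rfl] at h2
    simp [psi_zero] at h2
    linear_combination -h2
  · rintro ⟨hz, hbd⟩ j k hj hjk hk
    have hjd : j ≤ d := by omega
    have hkd : k ≤ d := by omega
    constructor
    · rw [c0, c1, c2, cb j hjd, hz j hj (by omega)]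
      ring
    · rw [c0, c1, cb j hjd, cb k hkd, cb (j - 1) (by omega), cb (k + 1) (by omega),
        hz j hj (by omega)]
      by_cases hcase : j = 1 ∧ k = d - 1
      · obtain ⟨rfl, rfl⟩ := hcase
        have e1 : d - (d - 1) - 1 = 0 := by omega
        have e2 : (1 : ℕ) - 1 = 0 := by omega
        have e3 : d - 1 - 1 = d - 2 := by omega
        have e4 : d - 1 + 1 = d := by omega
        rw [e1, e2, e3, e4, c2]
        simp [psi_zero, hbd]
      · have hrhs : (0 : ℂ) ^ (d - k - 1) * (0 : ℂ) ^ (j - 1) = 0 := by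
          rcases Nat.lt_or_ge 1 j with hj2 | hj2
          · rw [zero_pow (by omega : j - 1 ≠ 0)]; ring
          · have hj1 : j = 1 := by omega
            have hk1 : k < d - 1 := by
              rcases Nat.lt_or_ge k (d - 1) with h | h
              · exact h
              · exact absurd ⟨hj1, by omega⟩ hcase
            rw [zero_pow (by omega : d - k - 1 ≠ 0)]; ring
        rw [hrhs, zero_mul]
        rcases Nat.lt_or_ge 1 j with hj2 | hj2
        · rw [hz (j - 1) (by omega) (by omega)]; ring
        · have hj1 : j = 1 := by omega
          have hk1 : k < d - 1 := by
            rcases Nat.lt_or_ge k (d - 1) with h | h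
            · exact h
            · exact absurd ⟨hj1, by omega⟩ hcase
          rw [hz (k + 1) (by omega) (by omega)]; ring
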